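/- arXiv:2010.15118 — 2 statements merged into one kernel-verified Lean document; each statement's English description precedes it below -/
import Mathlib

section
/- (q-Binomial theorem) For 0<q<1, complex a, and |z|<1, ∑_{k=0}^∞ ((a;q)_k/(q;q)_k) z^k = (a z; q)_∞ / (z; q)_∞. -/
open Finset

noncomputable def qPoch (q a : ℂ) (n : ℕ) : ℂ := ∏ k ∈ Finset.range n, (1 - a * q ^ k)

noncomputable def qPochInf (q a : ℂ) : ℂ := ∏' k : ℕ, (1 - a * q ^ k)

noncomputable def cauchyP (q x y : ℂ) (n : ℕ) : ℂ := ∏ k ∈ Finset.range n, (x - q ^ k * y)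

noncomputable def qBinom (q : ℂ) (n k : ℕ) : ℂ := qPoch q q n / (qPoch q q k * qPoch q q (n - k))

noncomputable def Dq (q : ℂ) (f : ℂ → ℂ) : ℂ → ℂ := fun a => (f a - f (q * a)) / a

noncomputable def thetaq (q : ℂ) (f : ℂ → ℂ) : ℂ → ℂ := fun a => (f (a / q) - f a) / (a / q)

noncomputable def qIntegral (q : ℂ) (f : ℂ → ℂ) (c d : ℂ) : ℂ :=
  (1 - q) * ∑' n : ℕ, q ^ n * (d * f (d * q ^ n) - c * f (c * q ^ n))

/-!
Let `F(w) = ∑ (a;q)_k / (q;q)_k w^k`. Its coefficients converge to `(a;q)_∞ / (q;q)_∞`, hence are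
bounded, so `F` converges on the unit disc and is continuous at `0`, where `F(0) = 1`. Comparing
coefficients gives `(1 - w) F(w) = (1 - a w) F(q w)`; iterating, `F(z) (z;q)_n = (az;q)_n F(q^n z)`,
and letting `n → ∞` yields `F(z) (z;q)_∞ = (az;q)_∞`.
-/

open Filter Topology

theorem norm_pow_mul_lt_one {R : Type*} [NormedDivisionRing R] {x y : R} (hx : ‖x‖ < 1) (n : ℕ)
    (hy : ‖y‖ < 1) : ‖x ^ n * y‖ < 1 := by
  rw [norm_mul, norm_pow]
  exact mul_lt_one_of_nonneg_of_lt_one_right (pow_le_one₀ (norm_nonneg x) hx.le) (norm_nonneg y) hy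

section

variable {q : ℂ}

theorem qPoch_succ (q a : ℂ) (n : ℕ) : qPoch q a (n + 1) = qPoch q a n * (1 - a * q ^ n) :=
  prod_range_succ _ n

theorem summable_norm_mul_pow (hq : ‖q‖ < 1) (w : ℂ) : Summable fun k : ℕ => ‖w * q ^ k‖ := by
  simpa only [norm_mul, norm_pow] using
    (summable_geometric_of_lt_one (norm_nonneg q) hq).mul_left ‖w‖

theorem hasProd_qPochInf (hq : ‖q‖ < 1) (w : ℂ) :
    HasProd (fun k : ℕ => 1 - w * q ^ k) (qPochInf q w) := by
  have h := multipliable_one_add_of_summable (f := fun k : ℕ => -(w * q ^ k))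
    (by simpa only [norm_neg] using summable_norm_mul_pow hq w)
  simp only [← sub_eq_add_neg] at h
  exact h.hasProd

theorem tendsto_qPoch (hq : ‖q‖ < 1) (w : ℂ) :
    Tendsto (qPoch q w) atTop (𝓝 (qPochInf q w)) :=
  (hasProd_qPochInf hq w).tendsto_prod_nat

theorem one_sub_mul_pow_ne_zero (hq : ‖q‖ < 1) {w : ℂ} (hw : ‖w‖ < 1) (k : ℕ) :
    1 - w * q ^ k ≠ 0 := by
  rw [sub_ne_zero]
  intro h
  have := norm_pow_mul_lt_one hq k hw
  rw [mul_comm, ← h, norm_one] at this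
  exact this.false

theorem qPoch_ne_zero (hq : ‖q‖ < 1) {w : ℂ} (hw : ‖w‖ < 1) (n : ℕ) : qPoch q w n ≠ 0 :=
  prod_ne_zero_iff.mpr fun k _ => one_sub_mul_pow_ne_zero hq hw k

theorem qPochInf_ne_zero (hq : ‖q‖ < 1) {w : ℂ} (hw : ‖w‖ < 1) : qPochInf q w ≠ 0 := by
  have h := tprod_one_add_ne_zero_of_summable (f := fun k : ℕ => -(w * q ^ k))
    (fun k => by simpa only [← sub_eq_add_neg] using one_sub_mul_pow_ne_zero hq hw k)
    (by simpa only [norm_neg] using summable_norm_mul_pow hq w)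
  simpa only [← sub_eq_add_neg, qPochInf] using h

theorem exists_norm_qPoch_div_le (hq : ‖q‖ < 1) (a : ℂ) :
    ∃ C, ∀ k, ‖qPoch q a k / qPoch q q k‖ ≤ C := by
  have h := (tendsto_qPoch hq a).div (tendsto_qPoch hq q) (qPochInf_ne_zero hq hq)
  obtain ⟨C, hC⟩ := isBounded_iff_forall_norm_le.mp (Metric.isBounded_range_of_tendsto _ h)
  exact ⟨C, fun k => hC _ (Set.mem_range_self k)⟩

theorem qPoch_div_succ_mul (hq : ‖q‖ < 1) (a : ℂ) (k : ℕ) :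
    qPoch q a (k + 1) / qPoch q q (k + 1) * (1 - q ^ (k + 1)) =
      qPoch q a k / qPoch q q k * (1 - a * q ^ k) := by
  have h₁ := qPoch_ne_zero hq hq k
  have h₂ := one_sub_mul_pow_ne_zero hq hq k
  rw [qPoch_succ, qPoch_succ, ← pow_succ']
  rw [← pow_succ'] at h₂
  field_simp

noncomputable def qBinomialSeries (q a w : ℂ) : ℂ := ∑' k : ℕ, qPoch q a k / qPoch q q k * w ^ k

theorem hasSum_qBinomialSeries (hq : ‖q‖ < 1) (a : ℂ) {w : ℂ} (hw : ‖w‖ < 1) :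
    HasSum (fun k : ℕ => qPoch q a k / qPoch q q k * w ^ k) (qBinomialSeries q a w) := by
  obtain ⟨C, hC⟩ := exists_norm_qPoch_div_le hq a
  refine (Summable.of_norm_bounded
    ((summable_geometric_of_lt_one (norm_nonneg w) hw).mul_left C) fun k => ?_).hasSum
  rw [norm_mul, norm_pow]
  exact mul_le_mul_of_nonneg_right (hC k) (pow_nonneg (norm_nonneg w) k)

theorem qBinomialSeries_zero (q a : ℂ) : qBinomialSeries q a 0 = 1 := by
  rw [qBinomialSeries, tsum_eq_single 0 fun k hk => by simp [hk]]
  simp [qPoch]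

theorem continuousAt_qBinomialSeries_zero (hq : ‖q‖ < 1) (a : ℂ) :
    ContinuousAt (qBinomialSeries q a) 0 := by
  obtain ⟨C, hC⟩ := exists_norm_qPoch_div_le hq a
  have h : ContinuousOn (qBinomialSeries q a) (Metric.closedBall 0 (1 / 2)) := by
    refine continuousOn_tsum (fun k => by fun_prop)
      ((summable_geometric_of_lt_one one_half_pos.le one_half_lt_one).mul_left C) fun k w hw => ?_
    rw [mem_closedBall_zero_iff] at hw
    rw [norm_mul, norm_pow]
    exact mul_le_mul (hC k) (pow_le_pow_left₀ (norm_nonneg w) hw k) (by positivity)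
      ((norm_nonneg _).trans (hC 0))
  exact h.continuousAt (Metric.closedBall_mem_nhds 0 one_half_pos)

theorem qBinomialSeries_functional_equation (hq : ‖q‖ < 1) (a : ℂ) {w : ℂ} (hw : ‖w‖ < 1) :
    (1 - w) * qBinomialSeries q a w = (1 - a * w) * qBinomialSeries q a (q * w) := by
  have hF := hasSum_qBinomialSeries hq a hw
  have hFq := hasSum_qBinomialSeries hq a (w := q * w) (by simpa using norm_pow_mul_lt_one hq 1 hw)
  set c : ℕ → ℂ := fun k => qPoch q a k / qPoch q q k
  -- Both sides are the sum of `c k * (1 - q ^ k) * w ^ k`: directly, and after a shift of index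
  -- using `c (k + 1) * (1 - q ^ (k + 1)) = c k * (1 - a * q ^ k)`.
  have hdiff : HasSum (fun k => c k * (1 - q ^ k) * w ^ k)
      (qBinomialSeries q a w - qBinomialSeries q a (q * w)) :=
    (hF.sub hFq).congr_fun fun k => by ring
  have hshift : HasSum (fun k => c k * (1 - q ^ k) * w ^ k)
      (w * qBinomialSeries q a w - a * w * qBinomialSeries q a (q * w)) := by
    rw [← hasSum_nat_add_iff' 1, sum_range_one, pow_zero, sub_self, mul_zero, zero_mul, sub_zero]
    refine ((hF.mul_left w).sub (hFq.mul_left (a * w))).congr_fun fun k => ?_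
    rw [qPoch_div_succ_mul hq a k, mul_pow]
    ring
  linear_combination hdiff.unique hshift

theorem qBinomialSeries_mul_qPoch (hq : ‖q‖ < 1) (a : ℂ) {z : ℂ} (hz : ‖z‖ < 1) (n : ℕ) :
    qBinomialSeries q a z * qPoch q z n = qPoch q (a * z) n * qBinomialSeries q a (q ^ n * z) := by
  induction n with
  | zero => simp [qPoch]
  | succ n ih =>
    have h := qBinomialSeries_functional_equation hq a (norm_pow_mul_lt_one hq n hz)
    rw [show q * (q ^ n * z) = q ^ (n + 1) * z by ring] at h
    rw [qPoch_succ, qPoch_succ]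
    linear_combination (1 - z * q ^ n) * ih + qPoch q (a * z) n * h

theorem qBinomialSeries_eq (hq : ‖q‖ < 1) (a : ℂ) {z : ℂ} (hz : ‖z‖ < 1) :
    qBinomialSeries q a z = qPochInf q (a * z) / qPochInf q z := by
  rw [eq_div_iff (qPochInf_ne_zero hq hz)]
  have htail : Tendsto (fun n => qBinomialSeries q a (q ^ n * z)) atTop (𝓝 1) := by
    rw [← qBinomialSeries_zero q a]
    refine (continuousAt_qBinomialSeries_zero hq a).tendsto.comp ?_
    simpa using (tendsto_pow_atTop_nhds_zero_of_norm_lt_one hq).mul_const z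
  have hlim := ((tendsto_qPoch hq (a * z)).mul htail).congr
    fun n => (qBinomialSeries_mul_qPoch hq a hz n).symm
  simpa using tendsto_nhds_unique ((tendsto_qPoch hq z).const_mul _) hlim

end

theorem q_binomial_theorem (q : ℝ) (hq0 : 0 < q) (hq1 : q < 1) (a z : ℂ) (hz : ‖z‖ < 1) :
    HasSum (fun k : ℕ => qPoch (q : ℂ) a k / qPoch (q : ℂ) (q : ℂ) k * z ^ k)
      (qPochInf (q : ℂ) (a * z) / qPochInf (q : ℂ) z) := by
  have hq : ‖(q : ℂ)‖ < 1 := by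
    rw [Complex.norm_real, Real.norm_eq_abs, abs_lt]
    constructor <;> linarith
  rw [← qBinomialSeries_eq hq a hz]
  exact hasSum_qBinomialSeries hq a hz
end

section
/- (Euler's second identity) For 0<q<1 and all complex z, ∑_{k=0}^∞ ((-1)^k q^{binom(k,2)} / (q;q)_k) z^k = (z;q)_∞. -/
open Finset Filter Topology
set_option maxHeartbeats 1000000

noncomputable def eulC (q : ℂ) (k : ℕ) : ℂ := (-1) ^ k * q ^ (k.choose 2) / qPoch q q k

section aux

variable {q : ℝ} (hq0 : 0 < q) (hq1 : q < 1)

include hq0 hq1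

lemma factor_ne (j : ℕ) : (1 : ℂ) - (q : ℂ) * (q : ℂ) ^ j ≠ 0 := by
  have h1 : (q : ℂ) * (q : ℂ) ^ j = ((q ^ (j + 1) : ℝ) : ℂ) := by
    push_cast; ring
  rw [h1, sub_ne_zero]
  intro h
  have h2 : (q ^ (j + 1) : ℝ) = 1 := by exact_mod_cast h.symm
  have hp : q ^ (j + 1) < 1 := pow_lt_one₀ hq0.le hq1 (Nat.succ_ne_zero j)
  linarith

lemma qPoch_ne (k : ℕ) : qPoch (q : ℂ) (q : ℂ) k ≠ 0 :=
  Finset.prod_ne_zero_iff.2 fun j _ => factor_ne hq0 hq1 j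

omit hq0 hq1 in
lemma eulC_zero : eulC (q : ℂ) 0 = 1 := by
  simp [eulC, qPoch]

lemma eulC_ne (k : ℕ) : eulC (q : ℂ) k ≠ 0 := by
  refine div_ne_zero (mul_ne_zero (pow_ne_zero _ (by norm_num)) (pow_ne_zero _ ?_))
    (qPoch_ne hq0 hq1 k)
  exact_mod_cast (ne_of_gt hq0 : (q:ℝ) ≠ 0)

lemma eulC_rec (k : ℕ) :
    eulC (q : ℂ) (k + 1) * (1 - (q : ℂ) ^ (k + 1)) = -(eulC (q : ℂ) k * (q : ℂ) ^ k) := by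
  have hps : qPoch (q : ℂ) (q : ℂ) (k + 1) = qPoch (q : ℂ) (q : ℂ) k * (1 - (q:ℂ) * (q:ℂ) ^ k) :=
    Finset.prod_range_succ _ _
  have hch : (k + 1).choose 2 = k.choose 2 + k := by
    rw [Nat.choose_succ_succ]
    simp [Nat.choose_one_right, Nat.add_comm]
  have h1 : (1 : ℂ) - (q:ℂ) ^ (k+1) = 1 - (q:ℂ) * (q:ℂ) ^ k := by ring
  rw [eulC, eulC, hps, hch, h1, pow_add]
  have hk := qPoch_ne hq0 hq1 k
  have hfac := factor_ne hq0 hq1 k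
  field_simp
  ring

lemma eulC_norm_rec (k : ℕ) :
    ‖eulC (q : ℂ) (k + 1)‖ * (1 - q ^ (k + 1)) = ‖eulC (q : ℂ) k‖ * q ^ k := by
  have h := congrArg norm (eulC_rec hq0 hq1 (q := q) k)
  rw [norm_neg, norm_mul, norm_mul] at h
  have h1 : ‖(1 : ℂ) - (q : ℂ) ^ (k + 1)‖ = 1 - q ^ (k + 1) := by
    have : (1 : ℂ) - (q : ℂ) ^ (k + 1) = ((1 - q ^ (k+1) : ℝ) : ℂ) := by push_cast; ring
    rw [this, Complex.norm_real, Real.norm_of_nonneg]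
    have hp : q ^ (k + 1) < 1 := pow_lt_one₀ hq0.le hq1 (Nat.succ_ne_zero k)
    linarith
  have h2 : ‖(q : ℂ) ^ k‖ = q ^ k := by
    rw [norm_pow, Complex.norm_real, Real.norm_of_nonneg hq0.le]
  rw [h1, h2] at h
  exact h

end aux

section main

variable {q : ℝ} (hq0 : 0 < q) (hq1 : q < 1)

include hq0 hq1

lemma summable_norm' (r : ℝ) (hr : 0 ≤ r) :
    Summable (fun k => ‖eulC (q : ℂ) k‖ * r ^ k) := by
  have h1q : 0 < 1 - q := by linarith
  apply summable_of_ratio_norm_eventually_le (r := 1/2) (by norm_num)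
  have htend : Tendsto (fun k : ℕ => q ^ k) atTop (𝓝 0) :=
    tendsto_pow_atTop_nhds_zero_of_lt_one hq0.le hq1
  have hev : ∀ᶠ k in atTop, q ^ k < (1 - q) / (2 * (r + 1)) :=
    htend.eventually (gt_mem_nhds (by positivity))
  filter_upwards [hev] with k hk
  have hck := eulC_norm_rec hq0 hq1 k
  have hqk1 : q ^ (k + 1) ≤ q := by
    calc q ^ (k + 1) ≤ q ^ 1 := pow_le_pow_of_le_one hq0.le hq1.le (by omega)
    _ = q := pow_one q
  have hA := norm_nonneg (eulC (q : ℂ) (k + 1))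
  have hB := norm_nonneg (eulC (q : ℂ) k)
  have hqk : (0:ℝ) ≤ q ^ k := pow_nonneg hq0.le k
  have s1 : ‖eulC (q : ℂ) (k+1)‖ * (1 - q) ≤ ‖eulC (q : ℂ) k‖ * q ^ k := by
    nlinarith [mul_nonneg hA (by linarith : (0:ℝ) ≤ q - q ^ (k+1))]
  have s2 : q ^ k * r ≤ (1 - q) / 2 := by
    have h2 : q ^ k * (2 * (r + 1)) ≤ 1 - q := by
      have := mul_le_mul_of_nonneg_right hk.le (show (0:ℝ) ≤ 2 * (r + 1) by positivity)
      rwa [div_mul_cancel₀ _ (by positivity : (2 * (r + 1) : ℝ) ≠ 0)] at this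
    nlinarith
  have s4 : 2 * (‖eulC (q : ℂ) (k+1)‖ * r) * (1 - q) ≤ ‖eulC (q : ℂ) k‖ * (1 - q) := by
    nlinarith [mul_le_mul_of_nonneg_right s1 hr, mul_le_mul_of_nonneg_left s2 hB]
  have s5 : 2 * (‖eulC (q : ℂ) (k+1)‖ * r) ≤ ‖eulC (q : ℂ) k‖ :=
    (mul_le_mul_iff_of_pos_right h1q).1 s4
  rw [Real.norm_of_nonneg (by positivity), Real.norm_of_nonneg (by positivity), pow_succ]
  nlinarith [mul_le_mul_of_nonneg_right s5 (pow_nonneg hr k)]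

lemma summable_eul (z : ℂ) : Summable (fun k => eulC (q : ℂ) k * z ^ k) := by
  apply Summable.of_norm
  have := summable_norm' hq0 hq1 ‖z‖ (norm_nonneg z)
  simpa [norm_mul, norm_pow] using this

end main

noncomputable def eulF (q z : ℂ) : ℂ := ∑' k : ℕ, eulC q k * z ^ k

section main2

variable {q : ℝ} (hq0 : 0 < q) (hq1 : q < 1)

include hq0 hq1

lemma hasSum_eulF (z : ℂ) :
    HasSum (fun k => eulC (q : ℂ) k * z ^ k) (eulF (q : ℂ) z) :=
  (summable_eul hq0 hq1 z).hasSum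

lemma funEq (z : ℂ) : eulF (q : ℂ) z = (1 - z) * eulF (q : ℂ) ((q : ℂ) * z) := by
  set Q := (q : ℂ) with hQ
  have h1 := hasSum_eulF hq0 hq1 (Q * z)
  have h2 := h1.mul_left z
  set u : ℕ → ℂ := fun k => if k = 0 then 0 else z * (eulC Q (k - 1) * (Q * z) ^ (k - 1)) with hu
  have h2' : HasSum (fun n => u (n + 1)) (z * eulF Q (Q * z)) := by
    have heq : (fun n => u (n + 1)) = fun n => z * (eulC Q n * (Q * z) ^ n) := by
      funext n; simp [hu]
    rw [heq]; exact h2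
  have h3 : HasSum u (z * eulF Q (Q * z)) := by
    have := (hasSum_nat_add_iff (f := u) 1).1 h2'
    simpa [hu] using this
  have h4 := h1.sub h3
  have h5 : (fun k => eulC Q k * (Q * z) ^ k - u k) = fun k => eulC Q k * z ^ k := by
    funext k
    cases k with
    | zero => simp [hu]
    | succ n =>
      simp only [hu, if_neg (Nat.succ_ne_zero n), Nat.add_sub_cancel]
      have hrec := eulC_rec hq0 hq1 n
      linear_combination (-(z ^ (n + 1))) * hrec
  rw [h5] at h4
  have h6 := (hasSum_eulF hq0 hq1 z).unique h4
  rw [h6]; ring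

lemma iterEq (z : ℂ) (n : ℕ) :
    eulF (q : ℂ) z = qPoch (q : ℂ) z n * eulF (q : ℂ) ((q : ℂ) ^ n * z) := by
  induction n with
  | zero => simp [qPoch]
  | succ n ih =>
    have harg : (q : ℂ) * ((q : ℂ) ^ n * z) = (q : ℂ) ^ (n + 1) * z := by ring
    calc eulF (q : ℂ) z = qPoch (q : ℂ) z n * eulF (q : ℂ) ((q : ℂ) ^ n * z) := ih
      _ = qPoch (q : ℂ) z n * ((1 - (q : ℂ) ^ n * z) * eulF (q : ℂ) ((q : ℂ) ^ (n + 1) * z)) := by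
          rw [funEq hq0 hq1 ((q : ℂ) ^ n * z), harg]
      _ = qPoch (q : ℂ) z (n + 1) * eulF (q : ℂ) ((q : ℂ) ^ (n + 1) * z) := by
          simp only [qPoch, Finset.prod_range_succ]; ring

lemma eulF_bound (w : ℂ) (hw : ‖w‖ ≤ 1) :
    ‖eulF (q : ℂ) w - 1‖ ≤ (∑' k : ℕ, ‖eulC (q : ℂ) (k + 1)‖) * ‖w‖ := by
  set Q := (q : ℂ)
  have h := hasSum_eulF hq0 hq1 w
  have h0 : eulC Q 0 * w ^ 0 = 1 := by simp [Q, eulC_zero (q := q)]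
  have hshift : HasSum (fun k => eulC Q (k + 1) * w ^ (k + 1)) (eulF Q w - 1) := by
    refine (hasSum_nat_add_iff (f := fun k => eulC Q k * w ^ k) 1).2 ?_
    have heq : eulF Q w - 1 + ∑ i ∈ Finset.range 1, eulC Q i * w ^ i = eulF Q w := by
      rw [Finset.sum_range_one, h0]; ring
    rw [heq]; exact h
  have hsum2 : Summable (fun k => ‖eulC Q (k + 1)‖) := by
    have h1 : Summable (fun k => ‖eulC Q k‖) := by
      have := summable_norm' hq0 hq1 1 zero_le_one
      simpa using this
    exact (summable_nat_add_iff 1).2 h1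
  have hterm : ∀ k : ℕ, ‖eulC Q (k + 1) * w ^ (k + 1)‖ ≤ ‖eulC Q (k + 1)‖ * ‖w‖ := by
    intro k
    rw [norm_mul, norm_pow]
    refine mul_le_mul_of_nonneg_left ?_ (norm_nonneg _)
    calc ‖w‖ ^ (k + 1) ≤ ‖w‖ ^ 1 := pow_le_pow_of_le_one (norm_nonneg w) hw (by omega)
      _ = ‖w‖ := pow_one _
  have hsum3 : Summable (fun k => ‖eulC Q (k + 1) * w ^ (k + 1)‖) :=
    Summable.of_nonneg_of_le (fun k => norm_nonneg _) hterm (hsum2.mul_right ‖w‖)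
  calc ‖eulF Q w - 1‖ = ‖∑' k : ℕ, eulC Q (k + 1) * w ^ (k + 1)‖ := by rw [hshift.tsum_eq]
    _ ≤ ∑' k : ℕ, ‖eulC Q (k + 1) * w ^ (k + 1)‖ := norm_tsum_le_tsum_norm hsum3
    _ ≤ ∑' k : ℕ, ‖eulC Q (k + 1)‖ * ‖w‖ := Summable.tsum_le_tsum hterm hsum3 (hsum2.mul_right ‖w‖)
    _ = (∑' k : ℕ, ‖eulC Q (k + 1)‖) * ‖w‖ := tsum_mul_right

end main2

section main3

variable {q : ℝ} (hq0 : 0 < q) (hq1 : q < 1)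

lemma hasProd_zero_of_eq_zero {f : ℕ → ℂ} (k0 : ℕ) (h : f k0 = 0) : HasProd f 0 := by
  rw [HasProd]
  have hev : ∀ᶠ s : Finset ℕ in atTop, ∏ i ∈ s, f i = 0 := by
    filter_upwards [eventually_ge_atTop ({k0} : Finset ℕ)] with s hs
    exact Finset.prod_eq_zero (Finset.singleton_subset_iff.1 hs) h
  exact Tendsto.congr' (hev.mono fun s hs => hs.symm) tendsto_const_nhds

include hq0 hq1

lemma tend_zero (z : ℂ) : Tendsto (fun n : ℕ => (q : ℂ) ^ n * z) atTop (𝓝 0) := by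
  have h1 : Tendsto (fun n : ℕ => (q : ℂ) ^ n) atTop (𝓝 0) := by
    apply tendsto_pow_atTop_nhds_zero_of_norm_lt_one
    rw [Complex.norm_real, Real.norm_of_nonneg hq0.le]
    exact hq1
  simpa using h1.mul_const z

lemma tendF (z : ℂ) : Tendsto (fun n : ℕ => eulF (q : ℂ) ((q : ℂ) ^ n * z)) atTop (𝓝 1) := by
  set M := ∑' k : ℕ, ‖eulC (q : ℂ) (k + 1)‖
  rw [← tendsto_sub_nhds_zero_iff]
  have h1 : ∀ᶠ w : ℂ in 𝓝 0, ‖w‖ ≤ 1 :=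
    (continuous_norm.tendsto (0 : ℂ)).eventually (eventually_le_nhds (by norm_num))
  apply squeeze_zero_norm' (a := fun n => M * ‖(q : ℂ) ^ n * z‖)
  · filter_upwards [(tend_zero hq0 hq1 z).eventually h1] with n hn
    exact eulF_bound hq0 hq1 _ hn
  · have := ((tend_zero hq0 hq1 z).norm).const_mul M
    simpa using this

lemma tendPoch (z : ℂ) :
    Tendsto (fun n : ℕ => qPoch (q : ℂ) z n) atTop (𝓝 (eulF (q : ℂ) z)) := by
  have hne : ∀ᶠ n : ℕ in atTop, eulF (q : ℂ) ((q : ℂ) ^ n * z) ≠ 0 :=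
    (tendF hq0 hq1 z).eventually_ne one_ne_zero
  have hdiv : Tendsto (fun n : ℕ => eulF (q : ℂ) z / eulF (q : ℂ) ((q : ℂ) ^ n * z)) atTop
      (𝓝 (eulF (q : ℂ) z)) := by
    have := (tendsto_const_nhds (x := eulF (q : ℂ) z) (f := atTop)).div (tendF hq0 hq1 z)
      one_ne_zero
    rw [div_one] at this
    exact this
  refine Tendsto.congr' ?_ hdiv
  filter_upwards [hne] with n hn
  exact ((eq_div_iff hn).2 (iterEq hq0 hq1 z n).symm).symm

lemma hasProd_eul (z : ℂ) : HasProd (fun k : ℕ => 1 - z * (q : ℂ) ^ k) (eulF (q : ℂ) z) := by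
  by_cases hz : ∀ k : ℕ, (1 : ℂ) - z * (q : ℂ) ^ k ≠ 0
  · have hlog : Summable (fun k : ℕ => Complex.log (1 - z * (q : ℂ) ^ k)) := by
      have ht : Tendsto (fun k : ℕ => ‖z‖ * q ^ k) atTop (𝓝 0) := by
        have := (tendsto_pow_atTop_nhds_zero_of_lt_one hq0.le hq1).const_mul ‖z‖
        simpa using this
      have hev : ∀ᶠ k : ℕ in atTop, ‖z‖ * q ^ k ≤ 1/2 :=
        ht.eventually (eventually_le_nhds (by norm_num))
      apply Summable.of_norm_bounded_eventually_nat (g := fun k => 3/2 * (‖z‖ * q ^ k))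
      · exact ((summable_geometric_of_lt_one hq0.le hq1).mul_left ‖z‖).mul_left (3/2)
      · filter_upwards [hev] with k hk
        have hnorm : ‖-(z * (q : ℂ) ^ k)‖ = ‖z‖ * q ^ k := by
          rw [norm_neg, norm_mul, norm_pow, Complex.norm_real, Real.norm_of_nonneg hq0.le]
        have heq : (1 : ℂ) - z * (q : ℂ) ^ k = 1 + -(z * (q : ℂ) ^ k) := by ring
        rw [heq]
        calc ‖Complex.log (1 + -(z * (q : ℂ) ^ k))‖
            ≤ 3/2 * ‖-(z * (q : ℂ) ^ k)‖ :=
              Complex.norm_log_one_add_half_le_self (by rw [hnorm]; exact hk)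
          _ = 3/2 * (‖z‖ * q ^ k) := by rw [hnorm]
    have hm : Multipliable (fun k : ℕ => 1 - z * (q : ℂ) ^ k) := by
      have := Complex.multipliable_of_summable_log hlog
      simpa using this
    have h1 : Tendsto (fun n : ℕ => qPoch (q : ℂ) z n) atTop
        (𝓝 (∏' k : ℕ, (1 - z * (q : ℂ) ^ k))) := hm.hasProd.tendsto_prod_nat
    have h2 : eulF (q : ℂ) z = ∏' k : ℕ, (1 - z * (q : ℂ) ^ k) :=
      tendsto_nhds_unique (tendPoch hq0 hq1 z) h1
    rw [h2]; exact hm.hasProd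
  · push_neg at hz
    obtain ⟨k0, hk0⟩ := hz
    have h0 : HasProd (fun k : ℕ => 1 - z * (q : ℂ) ^ k) 0 := hasProd_zero_of_eq_zero k0 hk0
    have hz0 : Tendsto (fun n : ℕ => qPoch (q : ℂ) z n) atTop (𝓝 0) := by
      apply Tendsto.congr' _ tendsto_const_nhds
      filter_upwards [eventually_ge_atTop (k0 + 1)] with n hn
      exact (Finset.prod_eq_zero (Finset.mem_range.2 (by omega)) hk0).symm
    have h2 : eulF (q : ℂ) z = 0 := tendsto_nhds_unique (tendPoch hq0 hq1 z) hz0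
    rw [h2]; exact h0

end main3

theorem euler_second_identity (q : ℝ) (hq0 : 0 < q) (hq1 : q < 1) (z : ℂ) :
    HasSum (fun k : ℕ => (-1 : ℂ) ^ k * (q : ℂ) ^ (k.choose 2) * z ^ k / qPoch (q : ℂ) (q : ℂ) k)
      (qPochInf (q : ℂ) z) := by
  have hqp : qPochInf (q : ℂ) z = eulF (q : ℂ) z := (hasProd_eul hq0 hq1 z).tprod_eq
  have hfun : (fun k : ℕ => (-1 : ℂ) ^ k * (q : ℂ) ^ (k.choose 2) * z ^ k /
      qPoch (q : ℂ) (q : ℂ) k) = fun k => eulC (q : ℂ) k * z ^ k := by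
    funext k; rw [eulC]; ring
  rw [hqp, hfun]
  exact hasSum_eulF hq0 hq1 z
end
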